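/- arXiv:2604.24293 — 2 statements merged into one kernel-verified Lean document; each statement's English description precedes it below -/
import Mathlib

section
/- Let N ≥ 1, α > 0, T_w > 0, and let t ↦ P(t) be a family of N×N real row-stochastic matrices with P_{ij}(t) ≥ α for all i, j and all t ≥ 0, such that t ↦ P(t) is continuous. Let x : [0,∞) → ℝ^N be differentiable and satisfy ẋ(t) = −(I − P(t)) x(t) for all t ≥ 0. Then with ρ := 1 − e^{−2αT_w} ∈ (0,1), one has diam(x(t + T_w)) ≤ (1 − ρ) · diam(x(t)) for all t ≥ 0, where diam(x) := max_i x_i − min_i x_i. -/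
open Matrix BigOperators

/-- The diameter of a vector: `diam x = max_i x_i − min_i x_i`. -/
noncomputable def vecDiam {N : ℕ} (x : Fin N → ℝ) : ℝ := (⨆ i, x i) - (⨅ i, x i)

/-!
The diameter is the maximum over pairs `(i, j)` of `x_i - x_j`. Along an active pair the
derivative is `(P x)_i - (P x)_j - diam x`, and since any two rows of `P` overlap in mass at
least `2α`, `(P x)_i - (P x)_j ≤ (1 - 2α) diam x`. So the upper right Dini derivative of the
diameter is at most `-2α diam`, and Grönwall's inequality gives the factor `e^{-2α T_w}`.
-/

open Filter Topology

lemma vecDiam_eq_zero_of_le_one {N : ℕ} (hN : N ≤ 1) (y : Fin N → ℝ) : vecDiam y = 0 := by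
  interval_cases N <;> simp [vecDiam]

lemma sub_le_vecDiam {N : ℕ} (y : Fin N → ℝ) (i j : Fin N) : y i - y j ≤ vecDiam y :=
  sub_le_sub (le_ciSup (Finite.bddAbove_range y) i) (ciInf_le (Finite.bddBelow_range y) j)

lemma vecDiam_eq_sup'_sub {N : ℕ} [NeZero N] (y : Fin N → ℝ) :
    vecDiam y =
      Finset.univ.sup' Finset.univ_nonempty fun p : Fin N × Fin N => y p.1 - y p.2 := by
  obtain ⟨i, hi⟩ := Finite.exists_max y
  obtain ⟨j, hj⟩ := Finite.exists_min y
  refine le_antisymm ?_ (Finset.sup'_le _ _ fun p _ => sub_le_vecDiam y p.1 p.2)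
  calc vecDiam y ≤ y i - y j := sub_le_sub (ciSup_le hi) (le_ciInf hj)
    _ ≤ _ := Finset.le_sup' (fun p : Fin N × Fin N => y p.1 - y p.2) (Finset.mem_univ (i, j))

theorem sum_sub_mul_le_one_sub_sum_min_mul {ι : Type*} [Fintype ι] {u v y : ι → ℝ}
    (hu : ∑ k, u k = 1) (hv : ∑ k, v k = 1) {m M : ℝ} (hm : ∀ k, m ≤ y k) (hM : ∀ k, y k ≤ M) :
    ∑ k, (u k - v k) * y k ≤ (1 - ∑ k, min (u k) (v k)) * (M - m) := by
  set c := fun k => min (u k) (v k)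
  -- `u - c` and `v - c` are nonnegative, each of total mass `1 - ∑ c`.
  calc ∑ k, (u k - v k) * y k = ∑ k, (u k - c k) * y k - ∑ k, (v k - c k) * y k := by
        rw [← Finset.sum_sub_distrib]; congr with k; ring
    _ ≤ ∑ k, (u k - c k) * M - ∑ k, (v k - c k) * m :=
        sub_le_sub
          (Finset.sum_le_sum fun k _ => mul_le_mul_of_nonneg_left (hM k) (by simp [c]))
          (Finset.sum_le_sum fun k _ => mul_le_mul_of_nonneg_left (hm k) (by simp [c]))
    _ = (1 - ∑ k, c k) * (M - m) := by
        simp only [← Finset.sum_mul, Finset.sum_sub_distrib, hu, hv]; ring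

theorem mulVec_sub_mulVec_le_vecDiam {N : ℕ} (hN : 2 ≤ N) {α : ℝ} (hα : 0 ≤ α)
    {Q : Matrix (Fin N) (Fin N) ℝ} (hrow : ∀ i, ∑ j, Q i j = 1) (hpos : ∀ i j, α ≤ Q i j)
    (y : Fin N → ℝ) (i j : Fin N) :
    (Q *ᵥ y) i - (Q *ᵥ y) j ≤ (1 - 2 * α) * vecDiam y := by
  have hoverlap : 2 * α ≤ ∑ k, min (Q i k) (Q j k) :=
    calc 2 * α ≤ N * α := by gcongr; exact_mod_cast hN
      _ = ∑ _k : Fin N, α := by simp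
      _ ≤ _ := Finset.sum_le_sum fun k _ => le_min (hpos i k) (hpos j k)
  have hmix : (Q *ᵥ y) i - (Q *ᵥ y) j = ∑ k, (Q i k - Q j k) * y k := by
    simp only [mulVec, dotProduct, sub_mul, Finset.sum_sub_distrib]
  rw [hmix]
  refine (sum_sub_mul_le_one_sub_sum_min_mul (hrow i) (hrow j)
    (ciInf_le (Finite.bddBelow_range y)) (le_ciSup (Finite.bddAbove_range y))).trans ?_
  exact mul_le_mul_of_nonneg_right (by linarith) ((sub_self (y i)) ▸ sub_le_vecDiam y i i)

theorem limsup_slope_finset_sup'_le {ι : Type*} {s : Finset ι} (hs : s.Nonempty)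
    {g : ι → ℝ → ℝ} {g' : ι → ℝ} {a r : ℝ}
    (hg : ∀ i ∈ s, HasDerivWithinAt (g i) (g' i) (Set.Ici a) a)
    (hr : ∀ i ∈ s, g i a = s.sup' hs (g · a) → g' i < r) :
    ∀ᶠ z in 𝓝[>] a, slope (fun z => s.sup' hs (g · z)) a z < r := by
  set F := fun z => s.sup' hs (g · z)
  -- Inactive indices stay below the line by continuity, active ones by their right derivative.
  have hbelow : ∀ i ∈ s, ∀ᶠ z in 𝓝[>] a, g i z < F a + r * (z - a) := by
    intro i hi
    rcases (Finset.le_sup' (g · a) hi).lt_or_eq with hlt | hactive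
    · have hline : Tendsto (fun z => F a + r * (z - a)) (𝓝[>] a) (𝓝 (F a)) := by
        have : Continuous fun z => F a + r * (z - a) := by fun_prop
        simpa using (this.tendsto a).mono_left nhdsWithin_le_nhds
      exact ((hg i hi).continuousWithinAt.mono Set.Ioi_subset_Ici_self).eventually_lt hline hlt
    · filter_upwards [(hg i hi).Ioi_of_Ici.limsup_slope_le' (lt_irrefl a) (hr i hi hactive),
        self_mem_nhdsWithin] with z hz hza
      rw [slope_def_field, div_lt_iff₀ (sub_pos.2 hza)] at hz
      linarith
  filter_upwards [(eventually_all_finset s).2 hbelow, self_mem_nhdsWithin] with z hz hza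
  rw [slope_def_field, div_lt_iff₀ (sub_pos.2 hza), sub_lt_iff_lt_add', Finset.sup'_lt_iff]
  exact hz

theorem vecDiam_le_exp_mul_of_hasDerivAt_mulVec_sub {N : ℕ} {α : ℝ} (hα : 0 ≤ α)
    {P : ℝ → Matrix (Fin N) (Fin N) ℝ}
    (hrow : ∀ t ≥ (0:ℝ), ∀ i, ∑ j, P t i j = 1) (hpos : ∀ t ≥ (0:ℝ), ∀ i j, α ≤ P t i j)
    {x : ℝ → Fin N → ℝ} (hode : ∀ t ≥ (0:ℝ), HasDerivAt x (P t *ᵥ x t - x t) t)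
    {t s : ℝ} (ht : 0 ≤ t) (hts : t ≤ s) :
    vecDiam (x s) ≤ Real.exp (-(2 * α) * (s - t)) * vecDiam (x t) := by
  rcases le_or_gt N 1 with hN | hN
  · simp [vecDiam_eq_zero_of_le_one hN]
  have : NeZero N := ⟨by omega⟩
  set g : Fin N × Fin N → ℝ → ℝ := fun p τ => x τ p.1 - x τ p.2
  have hg : ∀ τ ≥ (0:ℝ), ∀ p,
      HasDerivAt (g p) ((P τ *ᵥ x τ) p.1 - (P τ *ᵥ x τ) p.2 - g p τ) τ := by
    intro τ hτ p
    have hx := hasDerivAt_pi.1 (hode τ hτ)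
    exact ((hx p.1).sub (hx p.2)).congr_deriv (by simp only [Pi.sub_apply, g]; ring)
  have hdiam :
      (fun τ => vecDiam (x τ)) = fun τ => Finset.univ.sup' Finset.univ_nonempty (g · τ) :=
    funext fun τ => vecDiam_eq_sup'_sub (x τ)
  have hcont : ContinuousOn (fun τ => vecDiam (x τ)) (Set.Icc t s) := by
    rw [hdiam]
    exact ContinuousOn.finset_sup'_apply _ fun p _ τ hτ =>
      (hg τ (ht.trans hτ.1) p).continuousAt.continuousWithinAt
  have hdini : ∀ τ ∈ Set.Ico t s, ∀ r, -(2 * α) * vecDiam (x τ) < r →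
      ∃ᶠ z in 𝓝[>] τ, (z - τ)⁻¹ * (vecDiam (x z) - vecDiam (x τ)) < r := by
    intro τ hτ r hr
    have hτ0 : 0 ≤ τ := ht.trans hτ.1
    refine (limsup_slope_finset_sup'_le Finset.univ_nonempty
      (fun p _ => (hg τ hτ0 p).hasDerivWithinAt) fun p _ hactive => ?_).frequently.mono
      fun z hz => by rwa [← hdiam] at hz
    have hgp : g p τ = vecDiam (x τ) := hactive.trans (congrFun hdiam τ).symm
    have := mulVec_sub_mulVec_le_vecDiam hN hα (hrow τ hτ0) (hpos τ hτ0) (x τ) p.1 p.2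
    linarith
  have := le_gronwallBound_of_liminf_deriv_right_le (ε := 0) (K := -(2 * α)) hcont hdini
    le_rfl (fun _ _ => by simp) s ⟨hts, le_rfl⟩
  rwa [gronwallBound_ε0, mul_comm] at this

theorem timeVarying_consensus_window_contraction_general
    (N : ℕ) (α : ℝ) (hα : 0 < α) (Tw : ℝ) (hTw : 0 < Tw)
    (P : ℝ → Matrix (Fin N) (Fin N) ℝ)
    (hrow : ∀ t ≥ (0:ℝ), ∀ i, ∑ j, P t i j = 1)
    (hpos : ∀ t ≥ (0:ℝ), ∀ i j, α ≤ P t i j)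
    (x : ℝ → Fin N → ℝ)
    (hode : ∀ t ≥ (0:ℝ), HasDerivAt x ((P t).mulVec (x t) - x t) t) :
    (0 < 1 - Real.exp (-2 * α * Tw)) ∧ (1 - Real.exp (-2 * α * Tw) < 1) ∧
      ∀ t ≥ (0:ℝ),
        vecDiam (x (t + Tw)) ≤ (1 - (1 - Real.exp (-2 * α * Tw))) * vecDiam (x t) := by
  have hexp : Real.exp (-2 * α * Tw) < 1 := Real.exp_lt_one_iff.2 (by nlinarith)
  refine ⟨sub_pos.2 hexp, sub_lt_self _ (Real.exp_pos _), fun t ht => ?_⟩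
  have := vecDiam_le_exp_mul_of_hasDerivAt_mulVec_sub hα.le hrow hpos hode ht
    (le_add_of_nonneg_right hTw.le)
  rw [sub_sub_cancel]
  convert this using 3
  ring

/-- **Window contraction for the time-varying consensus flow.**
Under uniform positivity `P_{ij}(t) ≥ α`, with `ρ := 1 − e^{−2αT_w} ∈ (0,1)`, any
solution of `ẋ = −(I − P(t)) x` satisfies
`diam(x(t + T_w)) ≤ (1 − ρ) diam(x(t))` for all `t ≥ 0`. -/
theorem timeVarying_consensus_window_contraction
    (N : ℕ) (hN : 1 ≤ N) (α : ℝ) (hα : 0 < α) (Tw : ℝ) (hTw : 0 < Tw)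
    (P : ℝ → Matrix (Fin N) (Fin N) ℝ)
    (hPcont : Continuous P)
    (hrow : ∀ t ≥ (0:ℝ), ∀ i, ∑ j, P t i j = 1)
    (hnonneg : ∀ t ≥ (0:ℝ), ∀ i j, 0 ≤ P t i j)
    (hpos : ∀ t ≥ (0:ℝ), ∀ i j, α ≤ P t i j)
    (x : ℝ → Fin N → ℝ)
    (hode : ∀ t ≥ (0:ℝ), HasDerivAt x ((P t).mulVec (x t) - x t) t) :
    (0 < 1 - Real.exp (-2 * α * Tw)) ∧ (1 - Real.exp (-2 * α * Tw) < 1) ∧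
      ∀ t ≥ (0:ℝ),
        vecDiam (x (t + Tw)) ≤ (1 - (1 - Real.exp (-2 * α * Tw))) * vecDiam (x t) :=
  timeVarying_consensus_window_contraction_general N α hα Tw hTw P hrow hpos x hode
end

section
/- Let N ≥ 1, m ≥ 1, α > 0, and let t ↦ P(t) be a family of N×N real row-stochastic matrices with P_{ij}(t) ≥ α for all i, j and all t ≥ 0, such that t ↦ P(t) is continuous. Let H : [0,∞) → ℝ^{N×m} be differentiable and satisfy dH/dt = −(I − P(t)) H(t) for all t ≥ 0. Then for each feature dimension k ∈ {1,…,m}, diam(H_{·k}(t)) ≤ e^{−2αt} · diam(H_{·k}(0)) for all t ≥ 0, where H_{·k} denotes the k-th column and diam(x) := max_i x_i − min_i x_i; moreover, defining y(t) ∈ ℝ^m as the first row of H(t), one has ‖H(t) − 𝟏 y(t)ᵀ‖_F → 0 as t → ∞, where 𝟏 ∈ ℝ^N is the all-ones vector and ‖·‖_F is the Frobenius norm. -/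
open Matrix BigOperators Filter Topology

attribute [local instance] Matrix.normedAddCommGroup Matrix.normedSpace

/-- Frobenius norm of a real matrix. -/
noncomputable def frobNorm {N m : ℕ} (A : Matrix (Fin N) (Fin m) ℝ) : ℝ :=
  Real.sqrt (∑ i, ∑ k, (A i k) ^ 2)

open Set in
/-- Grönwall for a finite supremum of differentiable functions, where the
differential inequality is only assumed at indices achieving the sup. -/
lemma sup_gronwall {ι : Type*} [Fintype ι] [Nonempty ι]
    (f f' : ι → ℝ → ℝ) (K b : ℝ)
    (hderiv : ∀ p, ∀ t ∈ Icc (0:ℝ) b, HasDerivAt (f p) (f' p t) t)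
    (hbound : ∀ t ∈ Ico (0:ℝ) b, ∀ p, f p t = (⨆ q, f q t) → f' p t ≤ K * (⨆ q, f q t)) :
    ∀ t ∈ Icc (0:ℝ) b, (⨆ q, f q t) ≤ (⨆ q, f q 0) * Real.exp (K * t) := by
  set g : ℝ → ℝ := fun t => ⨆ q, f q t with hgdef
  have hgsup : ∀ t, g t = Finset.univ.sup' Finset.univ_nonempty (fun q => f q t) := fun t =>
    (Finset.sup'_univ_eq_ciSup _).symm
  have hcont : ContinuousOn g (Icc 0 b) := by
    intro t ht
    have h0 : ContinuousAt (fun s : ℝ => Finset.univ.sup' Finset.univ_nonempty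
        fun q => f q s) t :=
      ContinuousAt.finset_sup'_apply Finset.univ_nonempty
        (fun q _ => (hderiv q t ht).continuousAt)
    have hfe : g = fun s => Finset.univ.sup' Finset.univ_nonempty fun q => f q s :=
      funext hgsup
    exact (hfe ▸ h0).continuousWithinAt
  have key := le_gronwallBound_of_liminf_deriv_right_le (f := g) (f' := fun t => K * g t)
    (δ := g 0) (K := K) (ε := 0) (a := 0) (b := b) hcont ?_ le_rfl ?_
  · intro t ht
    have h := key t ht
    rwa [gronwallBound_ε0, sub_zero] at h
  · -- slope condition
    intro x hx r hr
    apply Filter.Eventually.frequently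
    have hx' : x ∈ Icc 0 b := ⟨hx.1, hx.2.le⟩
    have hall : ∀ p : ι, ∀ᶠ z in 𝓝[>] x, f p z < g x + r * (z - x) := by
      intro p
      by_cases hp : f p x = g x
      · -- active index
        have hlt : f' p x < r := lt_of_le_of_lt (hbound x hx p hp) hr
        have hslope : Tendsto (slope (f p) x) (𝓝[≠] x) (𝓝 (f' p x)) :=
          hasDerivAt_iff_tendsto_slope.1 (hderiv p x hx')
        have h1 : ∀ᶠ z in 𝓝[≠] x, slope (f p) x z < r :=
          hslope.eventually_lt_const hlt
        have h2 : ∀ᶠ z in 𝓝[>] x, slope (f p) x z < r :=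
          h1.filter_mono (nhdsWithin_mono x fun z hz => ne_of_gt hz)
        filter_upwards [h2, self_mem_nhdsWithin] with z hz hzx
        have hzx' : (0:ℝ) < z - x := sub_pos.2 hzx
        rw [slope_def_field, div_lt_iff₀ hzx'] at hz
        have := hp ▸ hz
        linarith
      · -- inactive index
        have hple : f p x ≤ g x := le_ciSup (Finite.bddAbove_range fun q => f q x) p
        have hplt : f p x < g x := lt_of_le_of_ne hple hp
        set c : ℝ := g x - f p x with hc
        have hc0 : 0 < c := sub_pos.2 hplt
        have hcin : ∀ᶠ z in 𝓝[>] x, f p z < f p x + c / 2 := by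
          have htend : Tendsto (f p) (𝓝[>] x) (𝓝 (f p x)) :=
            ((hderiv p x hx').continuousAt.continuousWithinAt)
          exact htend.eventually_lt_const (by linarith)
        have hd0 : 0 < c / (2 * (|r| + 1)) := by positivity
        have hzsmall : ∀ᶠ z in 𝓝[>] x, z ∈ Ioo x (x + c / (2 * (|r| + 1))) :=
          Ioo_mem_nhdsGT_of_mem ⟨le_rfl, by linarith⟩
        filter_upwards [hcin, hzsmall] with z h1 h2
        have hzx : (0:ℝ) < z - x := sub_pos.2 h2.1
        have hzu : z - x < c / (2 * (|r| + 1)) := by linarith [h2.2]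
        have habs : 0 ≤ |r| := abs_nonneg r
        have hrge : -|r| ≤ r := neg_abs_le r
        have key2 : -(c/2) ≤ r * (z - x) := by
          have h3 : -|r| * (z - x) ≤ r * (z - x) :=
            mul_le_mul_of_nonneg_right hrge hzx.le
          have h4 : |r| * (z - x) ≤ |r| * (c / (2 * (|r| + 1))) :=
            mul_le_mul_of_nonneg_left hzu.le habs
          have h5 : |r| * (c / (2 * (|r| + 1))) ≤ c / 2 := by
            rw [show |r| * (c / (2 * (|r| + 1))) = |r| * c / (2 * (|r| + 1)) by ring,
              div_le_div_iff₀ (by positivity) (by norm_num)]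
            nlinarith [hc0, habs]
          nlinarith
        have h6 : f p z < g x - c / 2 := by
          have h7 : f p x + c / 2 = g x - c / 2 := by rw [hc]; ring
          linarith
        linarith
    have hfin : ∀ᶠ z in 𝓝[>] x, ∀ p, f p z < g x + r * (z - x) := eventually_all.2 hall
    filter_upwards [hfin, self_mem_nhdsWithin] with z hz hzx
    have hzx' : (0:ℝ) < z - x := sub_pos.2 hzx
    have hglt : g z < g x + r * (z - x) := by
      rw [hgsup z, Finset.sup'_lt_iff]
      exact fun p _ => hz p
    rw [inv_mul_eq_div, div_lt_iff₀ hzx']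
    linarith
  · intro t _
    simp

lemma vecDiam_nonneg {N : ℕ} [Nonempty (Fin N)] (x : Fin N → ℝ) : 0 ≤ vecDiam x := by
  obtain ⟨i⟩ := (inferInstance : Nonempty (Fin N))
  have h1 : x i ≤ ⨆ j, x j := le_ciSup (Finite.bddAbove_range x) i
  have h2 : (⨅ j, x j) ≤ x i := ciInf_le (Finite.bddBelow_range x) i
  simp only [vecDiam]; linarith

lemma pair_sup_eq_vecDiam {N : ℕ} [Nonempty (Fin N)] (x : Fin N → ℝ) :
    (⨆ p : Fin N × Fin N, (x p.1 - x p.2)) = vecDiam x := by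
  obtain ⟨i0, hi0⟩ := Finite.exists_max x
  obtain ⟨j0, hj0⟩ := Finite.exists_min x
  have hsup : (⨆ i, x i) = x i0 :=
    le_antisymm (ciSup_le hi0) (le_ciSup (Finite.bddAbove_range x) i0)
  have hinf : (⨅ i, x i) = x j0 :=
    le_antisymm (ciInf_le (Finite.bddBelow_range x) j0) (le_ciInf hj0)
  have : vecDiam x = x i0 - x j0 := by rw [vecDiam, hsup, hinf]
  rw [this]
  refine le_antisymm (ciSup_le fun p => sub_le_sub (hi0 p.1) (hj0 p.2)) ?_
  exact le_ciSup (Finite.bddAbove_range fun p : Fin N × Fin N => x p.1 - x p.2) (i0, j0)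

lemma abs_sub_le_vecDiam {N : ℕ} [Nonempty (Fin N)] (x : Fin N → ℝ) (i j : Fin N) :
    |x i - x j| ≤ vecDiam x := by
  have h1 : ∀ a : Fin N, x a ≤ ⨆ b, x b := fun a => le_ciSup (Finite.bddAbove_range x) a
  have h2 : ∀ a : Fin N, (⨅ b, x b) ≤ x a := fun a => ciInf_le (Finite.bddBelow_range x) a
  rw [abs_sub_le_iff, vecDiam]
  constructor <;> [linarith [h1 i, h2 j]; linarith [h1 j, h2 i]]

/-- **Consensus trap under time-varying positive mixing.**
If `P(t)` is continuous, row-stochastic and uniformly positive (`P_{ij}(t) ≥ α`)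
and `H` solves `dH/dt = −(I − P(t)) H`, then each column diameter contracts as
`diam(H_{·k}(t)) ≤ e^{−2αt} diam(H_{·k}(0))`, and with `y(t)` the first row of
`H(t)` one has `‖H(t) − 𝟏 y(t)ᵀ‖_F → 0` as `t → ∞`. -/
theorem timeVarying_consensus_trap
    (N m : ℕ) (hN : 1 ≤ N) (hm : 1 ≤ m) (α : ℝ) (hα : 0 < α)
    (P : ℝ → Matrix (Fin N) (Fin N) ℝ)
    (hPcont : Continuous P)
    (hrow : ∀ t ≥ (0:ℝ), ∀ i, ∑ j, P t i j = 1)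
    (hnonneg : ∀ t ≥ (0:ℝ), ∀ i j, 0 ≤ P t i j)
    (hpos : ∀ t ≥ (0:ℝ), ∀ i j, α ≤ P t i j)
    (H : ℝ → Matrix (Fin N) (Fin m) ℝ)
    (hode : ∀ t ≥ (0:ℝ), HasDerivAt H ((P t) * (H t) - H t) t) :
    (∀ k : Fin m, ∀ t ≥ (0:ℝ),
        vecDiam (fun i => H t i k) ≤ Real.exp (-2 * α * t) * vecDiam (fun i => H 0 i k)) ∧
      Tendsto
        (fun t : ℝ => frobNorm (H t - Matrix.of fun (_ : Fin N) (k : Fin m) => H t ⟨0, hN⟩ k))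
        atTop (𝓝 0) := by
  haveI hNne : Nonempty (Fin N) := ⟨⟨0, hN⟩⟩
  -- componentwise derivatives
  have hcomp : ∀ t ≥ (0:ℝ), ∀ i k, HasDerivAt (fun s => H s i k)
      ((P t * H t - H t) i k) t := by
    intro t ht i k
    exact (hasDerivAt_pi.1 ((hasDerivAt_pi.1 (hode t ht)) i)) k
  -- Part 1
  have part1 : ∀ k : Fin m, ∀ t ≥ (0:ℝ),
      vecDiam (fun i => H t i k) ≤ Real.exp (-2 * α * t) * vecDiam (fun i => H 0 i k) := by
    intro k t ht
    rcases eq_or_lt_of_le hN with hN1 | hN2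
    · -- N = 1 : diameters vanish
      have hsub : Subsingleton (Fin N) := by
        rw [← hN1]; infer_instance
      have hdz : ∀ s : ℝ, vecDiam (fun i => H s i k) = 0 := by
        intro s
        have i : Fin N := ⟨0, hN⟩
        have h1 : (⨆ j, H s j k) = H s i k :=
          le_antisymm (ciSup_le fun j => by rw [Subsingleton.elim j i])
            (le_ciSup (Finite.bddAbove_range fun j => H s j k) i)
        have h2 : (⨅ j, H s j k) = H s i k :=
          le_antisymm (ciInf_le (Finite.bddBelow_range fun j => H s j k) i)
            (le_ciInf fun j => by rw [Subsingleton.elim j i])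
        simp [vecDiam, h1, h2]
      rw [hdz t, hdz 0, mul_zero]
    · -- N ≥ 2
      have hN2' : (2:ℝ) ≤ (N:ℝ) := by exact_mod_cast hN2
      set f : Fin N × Fin N → ℝ → ℝ := fun p s => H s p.1 k - H s p.2 k with hf
      set f' : Fin N × Fin N → ℝ → ℝ :=
        fun p s => (P s * H s - H s) p.1 k - (P s * H s - H s) p.2 k with hf'
      have hsupeq : ∀ s : ℝ, (⨆ q, f q s) = vecDiam (fun i => H s i k) := fun s =>
        pair_sup_eq_vecDiam (fun i => H s i k)
      have hder : ∀ p, ∀ s ∈ Set.Icc (0:ℝ) t, HasDerivAt (f p) (f' p s) s := by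
        intro p s hs
        exact ((hcomp s hs.1 p.1 k).sub (hcomp s hs.1 p.2 k))
      have hbd : ∀ s ∈ Set.Ico (0:ℝ) t, ∀ p, f p s = (⨆ q, f q s) →
          f' p s ≤ (-2 * α) * (⨆ q, f q s) := by
        intro s hs p hp
        have hs0 : (0:ℝ) ≤ s := hs.1
        obtain ⟨i, l⟩ := p
        set x : Fin N → ℝ := fun j => H s j k with hx
        set M : ℝ := ⨆ j, x j with hM
        set mm : ℝ := ⨅ j, x j with hmm
        have hxle : ∀ j, x j ≤ M := fun j => le_ciSup (Finite.bddAbove_range x) j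
        have hxge : ∀ j, mm ≤ x j := fun j => ciInf_le (Finite.bddBelow_range x) j
        have hMm : 0 ≤ M - mm := by
          have i0 : Fin N := ⟨0, hN⟩; linarith [hxle i0, hxge i0]
        have hgs : (⨆ q, f q s) = M - mm := hsupeq s
        have hact : x i - x l = M - mm := by rw [← hgs]; exact hp
        -- rewrite f'
        have hf'eq : f' (i, l) s =
            (∑ j, P s i j * x j) - x i - ((∑ j, P s l j * x j) - x l) := by
          simp [hf', Matrix.sub_apply, Matrix.mul_apply, hx]
        -- sum bounds
        have hcard : (Finset.univ : Finset (Fin N)).card = N := by simp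
        have hsum : ∀ a : Fin N, ∑ j, (P s a j - α) = 1 - (N:ℝ) * α := by
          intro a
          rw [Finset.sum_sub_distrib, hrow s hs0 a, Finset.sum_const, hcard]
          simp [nsmul_eq_mul]
        have hsplit : ∀ a : Fin N,
            ∑ j, P s a j * x j = (∑ j, (P s a j - α) * x j) + α * ∑ j, x j := by
          intro a
          rw [Finset.mul_sum, ← Finset.sum_add_distrib]
          exact Finset.sum_congr rfl fun j _ => by ring
        have hA : ∑ j, (P s i j - α) * x j ≤ (1 - (N:ℝ) * α) * M := by
          calc ∑ j, (P s i j - α) * x j ≤ ∑ j, (P s i j - α) * M :=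
                Finset.sum_le_sum fun j _ =>
                  mul_le_mul_of_nonneg_left (hxle j) (by linarith [hpos s hs0 i j])
            _ = (1 - (N:ℝ) * α) * M := by rw [← Finset.sum_mul, hsum i]
        have hB : (1 - (N:ℝ) * α) * mm ≤ ∑ j, (P s l j - α) * x j := by
          calc (1 - (N:ℝ) * α) * mm = ∑ j, (P s l j - α) * mm := by
                rw [← Finset.sum_mul, hsum l]
            _ ≤ ∑ j, (P s l j - α) * x j :=
                Finset.sum_le_sum fun j _ =>
                  mul_le_mul_of_nonneg_left (hxge j) (by linarith [hpos s hs0 l j])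
        rw [hf'eq, hgs, hsplit i, hsplit l]
        have hprod : 0 ≤ ((N:ℝ) * α - 2 * α) * (M - mm) :=
          mul_nonneg (by nlinarith) hMm
        nlinarith [hA, hB, hact, hMm]
      have hG := sup_gronwall f f' (-2 * α) t hder hbd t ⟨ht, le_rfl⟩
      rw [hsupeq t, hsupeq 0] at hG
      calc vecDiam (fun i => H t i k) ≤ vecDiam (fun i => H 0 i k) * Real.exp (-2 * α * t) :=
            hG
        _ = Real.exp (-2 * α * t) * vecDiam (fun i => H 0 i k) := mul_comm _ _
  refine ⟨part1, ?_⟩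
  -- Part 2
  set C : ℝ := Real.sqrt (∑ i : Fin N, ∑ k : Fin m, (vecDiam fun j => H 0 j k) ^ 2) with hC
  have hfb : ∀ t ≥ (0:ℝ),
      frobNorm (H t - Matrix.of fun (_ : Fin N) (k : Fin m) => H t ⟨0, hN⟩ k)
        ≤ Real.exp (-2 * α * t) * C := by
    intro t ht
    have hentry : ∀ i k, ((H t - Matrix.of fun (_ : Fin N) (k : Fin m) => H t ⟨0, hN⟩ k) i k) ^ 2
        ≤ (Real.exp (-2 * α * t)) ^ 2 * (vecDiam fun j => H 0 j k) ^ 2 := by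
      intro i k
      have h1 : |H t i k - H t ⟨0, hN⟩ k| ≤ vecDiam (fun j => H t j k) :=
        abs_sub_le_vecDiam (fun j => H t j k) i ⟨0, hN⟩
      have h2 := part1 k t ht
      have h3 : |H t i k - H t ⟨0, hN⟩ k| ≤
          Real.exp (-2 * α * t) * vecDiam (fun j => H 0 j k) := le_trans h1 h2
      have h4 : (H t - Matrix.of fun (_ : Fin N) (k : Fin m) => H t ⟨0, hN⟩ k) i k
          = H t i k - H t ⟨0, hN⟩ k := by simp [Matrix.sub_apply]
      rw [h4, ← sq_abs, ← mul_pow]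
      exact pow_le_pow_left₀ (abs_nonneg _) h3 2
    unfold frobNorm
    have hsumle : ∑ i, ∑ k, ((H t - Matrix.of fun (_ : Fin N) (k : Fin m) => H t ⟨0, hN⟩ k) i k) ^ 2
        ≤ (Real.exp (-2 * α * t)) ^ 2 * ∑ i : Fin N, ∑ k : Fin m, (vecDiam fun j => H 0 j k) ^ 2 := by
      rw [Finset.mul_sum]
      refine Finset.sum_le_sum fun i _ => ?_
      rw [Finset.mul_sum]
      exact Finset.sum_le_sum fun k _ => hentry i k
    calc Real.sqrt (∑ i, ∑ k, ((H t - Matrix.of fun (_ : Fin N) (k : Fin m) => H t ⟨0, hN⟩ k) i k) ^ 2)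
        ≤ Real.sqrt ((Real.exp (-2 * α * t)) ^ 2 *
            ∑ i : Fin N, ∑ k : Fin m, (vecDiam fun j => H 0 j k) ^ 2) :=
          Real.sqrt_le_sqrt hsumle
      _ = Real.exp (-2 * α * t) * C := by
          rw [Real.sqrt_mul (sq_nonneg _), Real.sqrt_sq (Real.exp_pos _).le, hC]
  have htend : Tendsto (fun t : ℝ => Real.exp (-2 * α * t) * C) atTop (𝓝 0) := by
    have h1 : Tendsto (fun t : ℝ => (-2 * α) * t) atTop atBot :=
      Tendsto.const_mul_atTop_of_neg (by linarith) tendsto_id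
    have h2 : Tendsto (fun t : ℝ => Real.exp (-2 * α * t)) atTop (𝓝 0) :=
      Real.tendsto_exp_atBot.comp h1
    simpa using h2.mul_const C
  refine squeeze_zero' ?_ ?_ htend
  · exact Filter.Eventually.of_forall fun t => Real.sqrt_nonneg _
  · filter_upwards [eventually_ge_atTop (0:ℝ)] with t ht using hfb t ht
end
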